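/- The virtual channel matrix is block Hankel: for all block indices 1 ≤ i, j, k, z ≤ (N+1)/2 with i+j = k+z, the Nr×Nt blocks satisfy H_v^{(i,j)} = H_v^{(k,z)}. -/

import Mathlib

/- STATEMENT 1: The virtual channel matrix is block Hankel: for all block indices
1 ≤ i, j, k, z ≤ (N+1)/2 with i+j = k+z, the Nr×Nt blocks satisfy H_v^{(i,j)} = H_v^{(k,z)}.
We write N = 2*m+1 (N ≥ 3 odd), so (N+1)/2 = m+1, and use 0-based block indices in
Fin (m+1); blocks are encoded by indexing H_v with product types. -/

open scoped BigOperators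

/-- `ξ(t) ∈ ℂ^{(N+1)/2}`, with `ξ(t)_i = √(2/(N+1)) e^{−j2π(i−1)t/(N Ts)}` (1-based `i`). -/
noncomputable def xiVec (m N : ℕ) (Ts t : ℝ) : Fin (m + 1) → ℂ := fun i =>
  (Real.sqrt (2 / ((N : ℝ) + 1)) : ℂ) *
    Complex.exp (((-(2 * Real.pi * (i : ℝ) * t / ((N : ℝ) * Ts))) : ℝ) * Complex.I)

/-- The virtual channel matrix
`H_v = Σ_{k=0}^K l_k (ξ(τ_k) ⊗ α_k)(ξ(−τ_k) ⊗ β_k)^H`, with `l_k = (N+1)γ_k/2`,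
indexed by `Fin (m+1) × Fin Nr` and `Fin (m+1) × Fin Nt` (Kronecker product indexing). -/
noncomputable def Hvirt (m Nr Nt K N : ℕ) (Ts : ℝ) (γ : Fin (K + 1) → ℂ)
    (τ : Fin (K + 1) → ℝ) (α : Fin (K + 1) → Fin Nr → ℂ)
    (β : Fin (K + 1) → Fin Nt → ℂ) :
    Matrix (Fin (m + 1) × Fin Nr) (Fin (m + 1) × Fin Nt) ℂ :=
  ∑ k, ((((N : ℂ) + 1) / 2) * γ k) •
    Matrix.vecMulVec (fun p => xiVec m N Ts (τ k) p.1 * α k p.2)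
      (fun q => (starRingEnd ℂ) (xiVec m N Ts (-(τ k)) q.1 * β k q.2))

/-! In the `(a, b)` block of the `k`-th rank-one term of `H_v`, the phases of `ξ(τ_k)_a` and
`conj ξ(−τ_k)_b` add up to `−2π(a + b)τ_k/(N Ts)`, so every block depends on `a + b` only. -/

open Complex ComplexConjugate

theorem xiVec_mul_conj_xiVec_neg (m N : ℕ) (Ts t : ℝ) (a b : Fin (m + 1)) :
    xiVec m N Ts t a * conj (xiVec m N Ts (-t) b) =
      2 / ((N : ℂ) + 1) *
        exp (((-(2 * Real.pi * ((a + b : ℕ) : ℝ) * t / ((N : ℝ) * Ts))) : ℝ) * I) := by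
  have hsqrt : (Real.sqrt (2 / ((N : ℝ) + 1)) : ℂ) * Real.sqrt (2 / ((N : ℝ) + 1)) =
      2 / ((N : ℂ) + 1) := by
    rw [← ofReal_mul, Real.mul_self_sqrt (by positivity)]
    push_cast
    ring
  simp only [xiVec, map_mul, conj_ofReal, ← exp_conj, conj_I]
  rw [mul_mul_mul_comm, hsqrt, ← exp_add]
  congr 2
  push_cast
  ring

theorem Hvirt_apply (m Nr Nt K N : ℕ) (Ts : ℝ) (γ : Fin (K + 1) → ℂ) (τ : Fin (K + 1) → ℝ)
    (α : Fin (K + 1) → Fin Nr → ℂ) (β : Fin (K + 1) → Fin Nt → ℂ)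
    (i j : Fin (m + 1)) (r : Fin Nr) (t : Fin Nt) :
    Hvirt m Nr Nt K N Ts γ τ α β (i, r) (j, t) =
      ∑ k, ((N : ℂ) + 1) / 2 * γ k *
        (xiVec m N Ts (τ k) i * conj (xiVec m N Ts (-(τ k)) j)) * (α k r * conj (β k t)) := by
  simp only [Hvirt, Matrix.sum_apply, Matrix.smul_apply, Matrix.vecMulVec_apply, map_mul,
    smul_eq_mul]
  refine Finset.sum_congr rfl fun k _ => ?_
  ring

theorem virtual_channel_block_hankel_general (m : ℕ) (N : ℕ)
    (Ts : ℝ) (Nr Nt : ℕ) (K : ℕ)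
    (γ : Fin (K + 1) → ℂ) (τ : Fin (K + 1) → ℝ)
    (α : Fin (K + 1) → Fin Nr → ℂ) (β : Fin (K + 1) → Fin Nt → ℂ) :
    ∀ (i j k z : Fin (m + 1)), (i : ℕ) + (j : ℕ) = (k : ℕ) + (z : ℕ) →
      ∀ (r : Fin Nr) (t : Fin Nt),
        Hvirt m Nr Nt K N Ts γ τ α β (i, r) (j, t) =
          Hvirt m Nr Nt K N Ts γ τ α β (k, r) (z, t) := by
  intro i j k z hsum r t
  simp only [Hvirt_apply, xiVec_mul_conj_xiVec_neg, hsum]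

theorem virtual_channel_block_hankel (m : ℕ) (hm : 1 ≤ m) (N : ℕ) (hN : N = 2 * m + 1)
    (Ts : ℝ) (hTs : 0 < Ts) (Nr Nt : ℕ) (hNr : 1 ≤ Nr) (hNt : 1 ≤ Nt) (K : ℕ)
    (γ : Fin (K + 1) → ℂ) (τ : Fin (K + 1) → ℝ)
    (α : Fin (K + 1) → Fin Nr → ℂ) (β : Fin (K + 1) → Fin Nt → ℂ) :
    ∀ (i j k z : Fin (m + 1)), (i : ℕ) + (j : ℕ) = (k : ℕ) + (z : ℕ) →
      ∀ (r : Fin Nr) (t : Fin Nt),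
        Hvirt m Nr Nt K N Ts γ τ α β (i, r) (j, t) =
          Hvirt m Nr Nt K N Ts γ τ α β (k, r) (z, t) :=
  virtual_channel_block_hankel_general m N Ts Nr Nt K γ τ α β
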